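/- Let Γ be a consistent counter machine with m states, let (i⁰,C⁰₁,C⁰₂) be an initial configuration with trajectory (i^t,C^t₁,C^t₂), t ∈ ℕ, and consider the associated Skorokhod data (θ, R) of dimension d = 5m+9 with x(t) = z^{i⁰,C⁰₁,C⁰₂} + θt. Then every Skorokhod solution (y,z) satisfies z(5t) = z^{i^t,C^t₁,C^t₂} for every t ∈ ℕ; in particular the B- and C-coordinates of z(5t) encode the state and the counter values of the counter machine at time t. -/

import Mathlib

open scoped BigOperators

/-- A Skorokhod solution for the matrix `R` and input path `x`:
continuous `y, z` on `[0,∞)` with `z = x + R y`, `z ≥ 0`, `y 0 = 0`,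
each `y j` nondecreasing, and `y j` does not increase while `z j > 0`
(the Lebesgue–Stieltjes measure of `y j` vanishes on `{s | z s j > 0}`). -/
def IsSkorokhodSolution {n : Type*} [Fintype n] (R : Matrix n n ℝ)
    (x y z : ℝ → n → ℝ) : Prop :=
  ContinuousOn y (Set.Ici 0) ∧
  ContinuousOn z (Set.Ici 0) ∧
  (∀ t : ℝ, 0 ≤ t → z t = x t + R.mulVec (y t)) ∧
  (∀ t : ℝ, 0 ≤ t → ∀ j, 0 ≤ z t j) ∧
  (y 0 = 0) ∧
  (∀ j, MonotoneOn (fun t => y t j) (Set.Ici 0)) ∧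
  (∀ j, ∀ s₁ s₂ : ℝ, 0 ≤ s₁ → s₁ ≤ s₂ →
      (∀ s ∈ Set.Ioo s₁ s₂, 0 < z s j) → y s₂ j = y s₁ j)

/-- `R` is an S-matrix: some nonnegative `w` with `R w > 0` componentwise. -/
def IsSMatrix {n : Type*} [Fintype n] (R : Matrix n n ℝ) : Prop :=
  ∃ w : n → ℝ, (∀ i, 0 ≤ w i) ∧ (∀ i, 0 < R.mulVec w i)

/-- `R` is completely-S: every (nonempty) principal submatrix is an S-matrix. -/
def IsCompletelyS {n : Type*} [Fintype n] [DecidableEq n] (R : Matrix n n ℝ) : Prop :=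
  ∀ I : Finset n, I.Nonempty →
    IsSMatrix (R.submatrix (fun a : I => (a : n)) (fun a : I => (a : n)))

/-- Stability of the fluid model `(z₀, θ, R)`: every Skorokhod solution for
`x t = z₀ + θ t` satisfies `z t → 0` as `t → ∞`. -/
def FluidStable {n : Type*} [Fintype n] (z0 θv : n → ℝ) (R : Matrix n n ℝ) : Prop :=
  ∀ y z : ℝ → n → ℝ,
    IsSkorokhodSolution R (fun t i => z0 i + θv i * t) y z →
    Filter.Tendsto z Filter.atTop (nhds 0)

/-- `f` is active at rate `r` on `(s₁, s₂)`. -/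
def ActiveAtRate (f : ℝ → ℝ) (r s₁ s₂ : ℝ) : Prop :=
  ∀ s ∈ Set.Ioo s₁ s₂, f s - f s₁ = r * (s - s₁)

/-- `f` is active at unit rate on `(s₁, s₂)`. -/
def UnitActive (f : ℝ → ℝ) (s₁ s₂ : ℝ) : Prop := ActiveAtRate f 1 s₁ s₂

/-- `f` is passive (constant) on `(s₁, s₂)`. -/
def Passive (f : ℝ → ℝ) (s₁ s₂ : ℝ) : Prop := ∀ s ∈ Set.Ioo s₁ s₂, f s = f s₁

/-- A counter machine with `m` states: update map with moves in
`{(-1,0),(0,-1),(0,0),(1,0),(0,1)}`, never decrementing a zero counter. -/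
structure CounterMachine (m : ℕ) where
  Γ : Fin m → Bool → Bool → Fin m × ℤ × ℤ
  moves : ∀ i b c, ((Γ i b c).2.1, (Γ i b c).2.2) ∈
      ({(-1,0), (0,-1), (0,0), (1,0), (0,1)} : Set (ℤ × ℤ))
  consistent : ∀ i b c, (b = false → 0 ≤ (Γ i b c).2.1) ∧ (c = false → 0 ≤ (Γ i b c).2.2)

/-- One step of the counter machine on a configuration. -/
def CounterMachine.step {m : ℕ} (M : CounterMachine m) :
    Fin m × ℕ × ℕ → Fin m × ℕ × ℕ := fun cfg =>
  let r := M.Γ cfg.1 (decide (0 < cfg.2.1)) (decide (0 < cfg.2.2))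
  (r.1, ((cfg.2.1 : ℤ) + r.2.1).toNat, ((cfg.2.2 : ℤ) + r.2.2).toNat)

/-- Index set of the associated Skorokhod problem: groups A (5), B (m), C (2),
D (2), E (4m), F (4m); total dimension 5m + 9. -/
inductive Idx (m : ℕ) where
  | A : Fin 5 → Idx m
  | B : Fin m → Idx m
  | C : Fin 2 → Idx m
  | D : Fin 2 → Idx m
  | E : Fin m → Bool → Bool → Idx m
  | F : Fin m → Bool → Bool → Idx m
  deriving DecidableEq, Fintype

/-- Numeric value of a bit. -/
def bnum (b : Bool) : ℝ := if b then 1 else 0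

/-- Real indicator of a decidable proposition. -/
def indC (P : Prop) [Decidable P] : ℝ := if P then 1 else 0

/-- The 5×5 block AA. -/
def AAmat : Matrix (Fin 5) (Fin 5) ℝ :=
  !![1,2,1,1,0; 0,1,2,1,1; 1,0,1,2,1; 1,1,0,1,2; 2,1,1,0,1]

/-- The reflection matrix `R` associated with the counter machine `M`. -/
def Rmat {m : ℕ} (M : CounterMachine m) : Matrix (Idx m) (Idx m) ℝ :=
  fun p q => match p, q with
  | .A k, .A l => AAmat k l
  | .B _, .A l => if l = 0 then -1 else 0
  | .B j, .B j' => if j' = j then 1 else 0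
  | .B j, .E i b c => if (M.Γ i b c).1 = j then 0 else 1
  | .C _, .A l => if l = 0 ∨ l = 3 then -1 else 0
  | .C k, .C k' => if k' = k then 1 else 0
  | .C k, .D k' => if k' = k then 1 else 0
  | .C k, .E i b c =>
      (if k = 0 then ((M.Γ i b c).2.1 : ℝ) else ((M.Γ i b c).2.2 : ℝ)) + 1
  | .D _, .A l => if l = 1 then -1 else 0
  | .D k, .C k' => if k' = k then 1 else 0
  | .D k, .D k' => if k' = k then 1 else 0
  | .E _ b c, .A l => if l = 0 then -(bnum b) - bnum c else if l = 2 then -1 else 0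
  | .E i _ _, .B j => if j = i then -1 else 0
  | .E _ b c, .C k => if k = 0 then 2 * bnum b - 1 else 2 * bnum c - 1
  | .E i b c, .E i' b' c' => if i' = i ∧ b' = b ∧ c' = c then 1 else 0
  | .E i b c, .F i' b' c' => if i' = i ∧ b' = b ∧ c' = c then 1 else 0
  | .F _ b c, .A l => if l = 0 then -(bnum b) - bnum c
      else if l = 2 then -1 else if l = 3 then -4 else if l = 4 then 4 else 0
  | .F i _ _, .B j => if j = i then -1 else 0
  | .F _ b c, .C k => if k = 0 then 2 * bnum b - 1 else 2 * bnum c - 1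
  | .F i b c, .E i' b' c' => if i' = i ∧ b' = b ∧ c' = c then 1 else 0
  | .F i b c, .F i' b' c' => if i' = i ∧ b' = b ∧ c' = c then 1 else 0
  | _, _ => 0

/-- The modified reflection matrix `R*` with halting state `i*`. -/
def RmatStar {m : ℕ} (M : CounterMachine m) (istar : Fin m) :
    Matrix (Idx m) (Idx m) ℝ :=
  fun p q => match p, q with
  | .A k, .B j => if j = istar ∧ (k = 2 ∨ k = 3 ∨ k = 4) then -1 else 0
  | .E i b c, .B j =>
      if j = istar then -3 + bnum b + bnum c else if j = i then -1 else 0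
  | .F i b c, .B j =>
      if j = istar then -4 + bnum b + bnum c else if j = i then -1 else 0
  | p, q => Rmat M p q

/-- The drift vector θ: −1 on the A-coordinates and 0 elsewhere. -/
def thetaVec (m : ℕ) : Idx m → ℝ := fun p => match p with
  | .A _ => -1
  | _ => 0

/-- The encoding `z^{i,C₁,C₂}` of a configuration as a state of the
Skorokhod problem. -/
def encCfg {m : ℕ} (i : Fin m) (C₁ C₂ : ℕ) : Idx m → ℝ := fun p => match p with
  | .A k => if k = 0 ∨ k = 4 then 0 else 1
  | .B j => if j = i then 0 else 1
  | .C k => if k = 0 then (C₁ : ℝ) else (C₂ : ℝ)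
  | .D _ => 0
  | .E _ _ _ => 3
  | .F _ _ _ => 4

/-- The linear input path `x t = z^{i,C₁,C₂} + θ t`. -/
def fluidX {m : ℕ} (i : Fin m) (C₁ C₂ : ℕ) : ℝ → Idx m → ℝ :=
  fun t p => encCfg i C₁ C₂ p + thetaVec m p * t

/-- The quantity Υ(i′,b,c) of the paper (for current configuration (i,C₁,C₂)). -/
def Upsilon {m : ℕ} (i : Fin m) (C₁ C₂ : ℕ) (i' : Fin m) (b c : Bool) : ℝ :=
  -(bnum b) - bnum c + (2 * bnum b - 1) * indC (C₁ = 0)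
    + (2 * bnum c - 1) * indC (C₂ = 0) - indC (i' = i)

/-!
The A-block of the reflection matrix is autonomous and circulant, and started from
`(0, 1, 1, 1, 0)` it runs as a clock: on `[t, t + 1]` exactly one regulator `y_{A, t mod 5}`
grows, at unit rate, and after five unit phases the A-block is back where it started. Every
other coordinate is then determined phase by phase from the one-dimensional fact that `y_j`
grows only while `z_j = 0`: if `z_j - y_j` dominates an explicit linear function `v - K s`,
then `y_j ≤ max 0 (K s - v)`, with equality when `z_j - y_j = v - K s`; mostly the bound is `0`
and `y_j` stays frozen. In phase 1 the state coordinates `B` are emptied and the counters are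
tested for zero (recorded in `D`), phase 2 restores the counters, in phase 3 the unique
coordinate `E (i, b, c)` matching the current state and zero tests fires, which writes the new
state into `B` and the counter moves plus one into `C`, and phases 4 and 5 remove that offset
and reset `E` and `F`. A time shift by `5` restarts the argument from the next configuration.
-/

open Set Matrix

theorem le_on_Icc_of_flat_where_pos {f g L : ℝ → ℝ} {a b : ℝ}
    (hf : ContinuousOn f (Icc a b)) (hL : ContinuousOn L (Icc a b))
    (hL_mono : MonotoneOn L (Icc a b)) (ha : f a ≤ L a)
    (hflat : ∀ s₁ s₂, a ≤ s₁ → s₁ ≤ s₂ → s₂ ≤ b → (∀ s ∈ Ioo s₁ s₂, 0 < g s) → f s₂ = f s₁)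
    (hpos : ∀ s ∈ Icc a b, L s < f s → 0 < g s) :
    ∀ s ∈ Icc a b, f s ≤ L s := by
  refine IsClosed.Icc_subset_of_forall_exists_gt (s := {u | f u ≤ L u}) ?_ ha
    fun s ⟨(hfs : f s ≤ L s), hs⟩ t hst => ?_
  · convert isClosed_Icc.isClosed_le hf hL using 1
    ext
    simp [and_comm]
  by_contra hempty
  set r := min t b
  have hr : r ∈ Icc a b := ⟨hs.1.trans (le_min hst.le hs.2.le), min_le_right _ _⟩
  have hsr : s < r := lt_min hst hs.2
  have hout : ∀ u ∈ Ioc s r, L u < f u := fun u hu =>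
    not_le.mp fun hle => hempty ⟨u, hle, hu.1, hu.2.trans (min_le_left _ _)⟩
  have hfr : f r = f s := hflat s r hs.1 hsr.le hr.2 fun u hu =>
    hpos u ⟨hs.1.trans hu.1.le, hu.2.le.trans hr.2⟩ (hout u ⟨hu.1, hu.2.le⟩)
  have := hout r ⟨hsr, le_rfl⟩
  have := hL_mono ⟨hs.1, hs.2.le⟩ hr hsr.le
  linarith

def linearPath {n : Type*} (w θ : n → ℝ) : ℝ → n → ℝ := fun t p => w p + θ p * t

namespace IsSkorokhodSolution

variable {n : Type*} [Fintype n] {R : Matrix n n ℝ} {x y z : ℝ → n → ℝ}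

theorem apply_eq (h : IsSkorokhodSolution R x y z) {s : ℝ} (hs : 0 ≤ s) :
    z s = x s + R *ᵥ y s :=
  h.2.2.1 s hs

theorem nonneg (h : IsSkorokhodSolution R x y z) {s : ℝ} (hs : 0 ≤ s) (j : n) : 0 ≤ y s j := by
  simpa [h.2.2.2.2.1] using h.2.2.2.2.2.1 j (mem_Ici.mpr le_rfl) hs hs

theorem le_max_of_le (h : IsSkorokhodSolution R x y z) {j : n} {b v K : ℝ}
    (hv : 0 ≤ v) (hK : 0 ≤ K) (hle : ∀ s ∈ Icc 0 b, v - K * s + y s j ≤ z s j) :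
    ∀ s ∈ Icc 0 b, y s j ≤ max 0 (K * s - v) := by
  obtain ⟨hy, -, -, -, hy0, -, hcompl⟩ := h
  refine le_on_Icc_of_flat_where_pos (g := fun s => z s j)
    (((continuous_apply j).comp_continuousOn hy).mono Icc_subset_Ici_self)
    (by fun_prop) (fun s _ t _ hst => max_le_max le_rfl (by nlinarith)) (by simp [hy0, hv])
    (fun s₁ s₂ h₁ h₂ _ hpos => hcompl j s₁ s₂ h₁ h₂ hpos) fun s hs hlt => ?_
  have := hle s hs
  have := le_max_right 0 (K * s - v)
  linarith

theorem eq_zero_of_le (h : IsSkorokhodSolution R x y z) {j : n} {b : ℝ}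
    (hle : ∀ s ∈ Icc 0 b, y s j ≤ z s j) : ∀ s ∈ Icc 0 b, y s j = 0 := fun s hs =>
  le_antisymm (by simpa using h.le_max_of_le le_rfl le_rfl (by simpa using hle) s hs)
    (h.nonneg hs.1 j)

theorem eq_max_of_eq (h : IsSkorokhodSolution R x y z) {j : n} {b v K : ℝ}
    (hv : 0 ≤ v) (hK : 0 ≤ K) (heq : ∀ s ∈ Icc 0 b, z s j = v - K * s + y s j) :
    ∀ s ∈ Icc 0 b, y s j = max 0 (K * s - v) := fun s hs => by
  have hub := h.le_max_of_le hv hK (fun s hs => (heq s hs).ge) s hs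
  have hz := heq s hs ▸ h.2.2.2.1 s hs.1 j
  exact le_antisymm hub (max_le (h.nonneg hs.1 j) (by linarith))

theorem shift {w w' θ : n → ℝ} (h : IsSkorokhodSolution R (linearPath w θ) y z) {T : ℝ}
    (hT : 0 ≤ T) (hzT : z T = w') :
    IsSkorokhodSolution R (linearPath w' θ) (fun t => y (T + t) - y T) (fun t => z (T + t)) := by
  subst hzT
  obtain ⟨hy, hz, heq, hznn, hy0, hmono, hcompl⟩ := h
  have hmaps : MapsTo (T + ·) (Ici 0) (Ici 0) := fun t ht => add_nonneg hT ht
  refine ⟨?_, ?_, fun t ht => ?_, fun t ht => hznn _ (add_nonneg hT ht), by simp,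
    fun j s hs t ht hst => ?_, fun j s₁ s₂ h₁ h₂ hpos => ?_⟩
  · exact ((hy.comp (by fun_prop) hmaps)).sub continuousOn_const
  · exact hz.comp (by fun_prop) hmaps
  · show z (T + t) = _
    rw [heq _ (add_nonneg hT ht), heq T hT, mulVec_sub]
    ext p
    simp only [linearPath, Pi.add_apply, Pi.sub_apply]
    ring
  · simpa using hmono j (add_nonneg hT hs) (add_nonneg hT ht) (by simpa using hst)
  · have := hcompl j (T + s₁) (T + s₂) (add_nonneg hT h₁) (by linarith) fun s hs => by
      simpa using hpos (s - T) ⟨by linarith [hs.1], by linarith [hs.2]⟩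
    simp [this]

theorem comp_embedding {n' : Type*} [Fintype n'] (h : IsSkorokhodSolution R x y z)
    (e : n' ↪ n) (hR : ∀ a q, q ∉ range e → R (e a) q = 0) :
    IsSkorokhodSolution (R.submatrix e e) (fun t => x t ∘ e) (fun t => y t ∘ e)
      (fun t => z t ∘ e) := by
  obtain ⟨hy, hz, heq, hznn, hy0, hmono, hcompl⟩ := h
  refine ⟨?_, ?_, fun t ht => ?_, fun t ht a => hznn t ht (e a), by simp [hy0],
    fun a => hmono (e a), fun a => hcompl (e a)⟩
  · exact continuousOn_pi.mpr fun a => (continuous_apply (e a)).comp_continuousOn hy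
  · exact continuousOn_pi.mpr fun a => (continuous_apply (e a)).comp_continuousOn hz
  · ext a
    simp only [heq t ht, Function.comp_apply, Pi.add_apply, mulVec, dotProduct, submatrix_apply]
    congr 1
    refine (Fintype.sum_of_injective e e.injective _ _ (fun q hq => ?_) fun _ => rfl).symm
    simp [hR a q hq]

theorem apply_zero (h : IsSkorokhodSolution R x y z) : z 0 = x 0 := by
  simp [h.apply_eq le_rfl, h.2.2.2.2.1]

theorem apply_linearPath {w θ : n → ℝ} (h : IsSkorokhodSolution R (linearPath w θ) y z)
    {s : ℝ} (hs : 0 ≤ s) (p : n) : z s p = w p + θ p * s + (R *ᵥ y s) p :=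
  congrFun (h.apply_eq hs) p

end IsSkorokhodSolution

namespace Idx

variable {m : ℕ}

def equivSum (m : ℕ) :
    Fin 5 ⊕ Fin m ⊕ Fin 2 ⊕ Fin 2 ⊕ (Fin m × Bool × Bool) ⊕ (Fin m × Bool × Bool) ≃ Idx m where
  toFun
    | .inl k => .A k
    | .inr (.inl j) => .B j
    | .inr (.inr (.inl k)) => .C k
    | .inr (.inr (.inr (.inl k))) => .D k
    | .inr (.inr (.inr (.inr (.inl (i, b, c))))) => .E i b c
    | .inr (.inr (.inr (.inr (.inr (i, b, c))))) => .F i b c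
  invFun
    | .A k => .inl k
    | .B j => .inr (.inl j)
    | .C k => .inr (.inr (.inl k))
    | .D k => .inr (.inr (.inr (.inl k)))
    | .E i b c => .inr (.inr (.inr (.inr (.inl (i, b, c)))))
    | .F i b c => .inr (.inr (.inr (.inr (.inr (i, b, c)))))
  left_inv q := by rcases q with k | j | k | k | ⟨i, b, c⟩ | ⟨i, b, c⟩ <;> rfl
  right_inv p := by cases p <;> rfl

theorem sum_eq (g : Idx m → ℝ) :
    ∑ p, g p = ∑ k, g (.A k) + ∑ j, g (.B j) + ∑ k, g (.C k) + ∑ k, g (.D k)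
      + ∑ e : Fin m × Bool × Bool, g (.E e.1 e.2.1 e.2.2)
      + ∑ e : Fin m × Bool × Bool, g (.F e.1 e.2.1 e.2.2) := by
  rw [← (equivSum m).sum_comp]
  simp [Fintype.sum_sum_type, equivSum, add_assoc]

end Idx

def move {m : ℕ} (r : Fin m × ℤ × ℤ) (k : Fin 2) : ℝ := if k = 0 then r.2.1 else r.2.2

namespace IsSkorokhodSolution

variable {m : ℕ} {M : CounterMachine m} {w : Idx m → ℝ} {y z : ℝ → Idx m → ℝ} {s : ℝ}

theorem apply_B (h : IsSkorokhodSolution (Rmat M) (linearPath w (thetaVec m)) y z)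
    (hs : 0 ≤ s) (j : Fin m) :
    z s (.B j) = w (.B j) - y s (.A 0) + y s (.B j)
      + ∑ e : Fin m × Bool × Bool,
          (if (M.Γ e.1 e.2.1 e.2.2).1 = j then 0 else 1) * y s (.E e.1 e.2.1 e.2.2) := by
  simp [h.apply_linearPath hs, mulVec, dotProduct, Idx.sum_eq, Rmat, thetaVec, sub_eq_add_neg,
    add_assoc]

theorem apply_C (h : IsSkorokhodSolution (Rmat M) (linearPath w (thetaVec m)) y z)
    (hs : 0 ≤ s) (k : Fin 2) :
    z s (.C k) = w (.C k) - y s (.A 0) - y s (.A 3) + y s (.C k) + y s (.D k)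
      + ∑ e : Fin m × Bool × Bool,
          (move (M.Γ e.1 e.2.1 e.2.2) k + 1) * y s (.E e.1 e.2.1 e.2.2) := by
  simp [h.apply_linearPath hs, mulVec, dotProduct, Idx.sum_eq, Rmat, thetaVec, Fin.sum_univ_five,
    move]
  ring

theorem apply_D (h : IsSkorokhodSolution (Rmat M) (linearPath w (thetaVec m)) y z)
    (hs : 0 ≤ s) (k : Fin 2) : z s (.D k) = w (.D k) - y s (.A 1) + y s (.C k) + y s (.D k) := by
  simp [h.apply_linearPath hs, mulVec, dotProduct, Idx.sum_eq, Rmat, thetaVec]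
  ring

theorem apply_E (h : IsSkorokhodSolution (Rmat M) (linearPath w (thetaVec m)) y z)
    (hs : 0 ≤ s) (i : Fin m) (b c : Bool) :
    z s (.E i b c) = w (.E i b c) - (bnum b + bnum c) * y s (.A 0) - y s (.A 2) - y s (.B i)
      + (2 * bnum b - 1) * y s (.C 0) + (2 * bnum c - 1) * y s (.C 1)
      + y s (.E i b c) + y s (.F i b c) := by
  have hsingle (e : Fin m × Bool × Bool) : (e.1 = i ∧ e.2.1 = b ∧ e.2.2 = c) ↔ e = (i, b, c) := by
    simp [Prod.ext_iff]
  simp [h.apply_linearPath hs, mulVec, dotProduct, Idx.sum_eq, Rmat, thetaVec, Fin.sum_univ_five,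
    hsingle]
  ring

theorem apply_F (h : IsSkorokhodSolution (Rmat M) (linearPath w (thetaVec m)) y z)
    (hs : 0 ≤ s) (i : Fin m) (b c : Bool) :
    z s (.F i b c) = w (.F i b c) - (bnum b + bnum c) * y s (.A 0) - y s (.A 2)
      - 4 * y s (.A 3) + 4 * y s (.A 4) - y s (.B i)
      + (2 * bnum b - 1) * y s (.C 0) + (2 * bnum c - 1) * y s (.C 1)
      + y s (.E i b c) + y s (.F i b c) := by
  have hsingle (e : Fin m × Bool × Bool) : (e.1 = i ∧ e.2.1 = b ∧ e.2.2 = c) ↔ e = (i, b, c) := by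
    simp [Prod.ext_iff]
  simp [h.apply_linearPath hs, mulVec, dotProduct, Idx.sum_eq, Rmat, thetaVec, Fin.sum_univ_five,
    hsingle]
  ring

end IsSkorokhodSolution

section Clock

theorem AAmat_apply (a b : Fin 5) : AAmat a b = ![1, 2, 1, 1, 0] (b - a) := by
  fin_cases a <;> fin_cases b <;> rfl

theorem AAmat_submatrix_add (k : Fin 5) : AAmat.submatrix (k + ·) (k + ·) = AAmat := by
  ext a b
  simp [AAmat_apply]

theorem clock_phase_zero {y z : ℝ → Fin 5 → ℝ}
    (h : IsSkorokhodSolution AAmat (linearPath ![0, 1, 1, 1, 0] fun _ => -1) y z) :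
    (∀ s ∈ Icc (0 : ℝ) 1, ∀ l, y s l = if l = 0 then s else 0) ∧ z 1 = ![0, 0, 1, 1, 1] := by
  have hz (s : ℝ) (hs : 0 ≤ s) (l : Fin 5) :
      z s l = ![0, 1, 1, 1, 0] l - s + ∑ l', AAmat l l' * y s l' := by
    simp [h.apply_eq hs, linearPath, mulVec, dotProduct, sub_eq_add_neg]
  have hy := fun s (hs : s ∈ Icc (0 : ℝ) 1) => h.nonneg hs.1
  have idle (l : Fin 5) (hl : ![(0 : ℝ), 1, 1, 1, 0] l = 1) : ∀ s ∈ Icc (0 : ℝ) 1, y s l = 0 :=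
    h.eq_zero_of_le fun s hs => by
      rw [hz s hs.1, hl, Fin.sum_univ_five]
      have := hy s hs
      fin_cases l <;> simp [AAmat] <;> linarith [hs.2, this 0, this 1, this 2, this 3, this 4]
  have h1 := idle 1 rfl
  have h2 := idle 2 rfl
  have h3 := idle 3 rfl
  have h0 : ∀ s ∈ Icc (0 : ℝ) 1, y s 0 = s := fun s hs => by
    have := h.eq_max_of_eq (j := 0) le_rfl zero_le_one (fun s hs => by
      rw [hz s hs.1, Fin.sum_univ_five]
      simp [AAmat, h1 s hs, h2 s hs, h3 s hs]) s hs
    rw [this, one_mul, sub_zero, max_eq_right hs.1]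
  have h4 : ∀ s ∈ Icc (0 : ℝ) 1, y s 4 = 0 := h.eq_zero_of_le fun s hs => by
    rw [hz s hs.1, Fin.sum_univ_five]
    simp [AAmat, h0 s hs, h1 s hs, h2 s hs, h3 s hs]
    linarith [hs.1]
  refine ⟨fun s hs l => ?_, funext fun l => ?_⟩
  · fin_cases l <;> simp [h0 s hs, h1 s hs, h2 s hs, h3 s hs, h4 s hs]
  · have hs : (1 : ℝ) ∈ Icc 0 1 := right_mem_Icc.2 zero_le_one
    rw [hz 1 zero_le_one, Fin.sum_univ_five]
    fin_cases l <;> norm_num [AAmat, h0 1 hs, h1 1 hs, h2 1 hs, h3 1 hs, h4 1 hs]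

def clock (k l : Fin 5) : ℝ := ![0, 1, 1, 1, 0] (l - k)

theorem clock_succ_add (k d : Fin 5) : clock (k + 1) (k + d) = ![0, 0, 1, 1, 1] d := by
  rw [clock, add_sub_add_left_eq_sub]
  fin_cases d <;> rfl

theorem encCfg_A {m : ℕ} (i : Fin m) (N₁ N₂ : ℕ) (l : Fin 5) :
    encCfg i N₁ N₂ (.A l) = clock 0 l := by
  fin_cases l <;> rfl

theorem IsSkorokhodSolution.clock_phase {m : ℕ} {M : CounterMachine m} {w : Idx m → ℝ}
    {y z : ℝ → Idx m → ℝ} (h : IsSkorokhodSolution (Rmat M) (linearPath w (thetaVec m)) y z)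
    {k : Fin 5} (hw : ∀ l, w (.A l) = clock k l) :
    (∀ s ∈ Icc (0 : ℝ) 1, ∀ l, y s (.A l) = if l = k then s else 0) ∧
      ∀ l, z 1 (.A l) = clock (k + 1) l := by
  let e : Fin 5 ↪ Idx m := ⟨fun d => .A (k + d), fun a b hab => add_left_cancel (Idx.A.inj hab)⟩
  have he (d : Fin 5) : e d = .A (k + d) := rfl
  have hR : (Rmat M).submatrix e e = AAmat := by
    rw [← AAmat_submatrix_add k]
    rfl
  have hx : (fun t => linearPath w (thetaVec m) t ∘ e) =
      linearPath ![0, 1, 1, 1, 0] fun _ => -1 := by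
    ext t d
    simp [he, linearPath, hw, clock, thetaVec]
  have hA := h.comp_embedding e fun a q hq => by
    cases q with
    | A l => exact absurd ⟨l - k, by simp [he]⟩ hq
    | _ => rfl
  rw [hR, hx] at hA
  obtain ⟨hy, hz⟩ := clock_phase_zero hA
  refine ⟨fun s hs l => ?_, fun l => ?_⟩
  · simpa [he, sub_eq_zero] using hy s hs (l - k)
  · have := clock_succ_add k (l - k)
    simp only [add_sub_cancel] at this
    simpa [he, this] using congrFun hz (l - k)

end Clock

section Machine

variable {m : ℕ} (M : CounterMachine m)

def CounterMachine.rule (i : Fin m) (N₁ N₂ : ℕ) : Fin m × ℤ × ℤ :=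
  M.Γ i (decide (0 < N₁)) (decide (0 < N₂))

def counterVal (N₁ N₂ : ℕ) (k : Fin 2) : ℝ := if k = 0 then N₁ else N₂

theorem counterVal_nonneg (N₁ N₂ : ℕ) (k : Fin 2) : 0 ≤ counterVal N₁ N₂ k := by
  unfold counterVal
  split <;> positivity

theorem CounterMachine.move_add_one_nonneg (i : Fin m) (b c : Bool) (k : Fin 2) :
    0 ≤ move (M.Γ i b c) k + 1 := by
  have hm := M.moves i b c
  simp only [Set.mem_insert_iff, Set.mem_singleton_iff, Prod.mk.injEq] at hm
  rcases hm with ⟨h₁, h₂⟩ | ⟨h₁, h₂⟩ | ⟨h₁, h₂⟩ | ⟨h₁, h₂⟩ | ⟨h₁, h₂⟩ <;>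
    simp only [move, h₁, h₂] <;> split <;> norm_num

theorem CounterMachine.counter_add_rule_nonneg (i : Fin m) (N₁ N₂ : ℕ) :
    0 ≤ (N₁ : ℤ) + (M.rule i N₁ N₂).2.1 ∧ 0 ≤ (N₂ : ℤ) + (M.rule i N₁ N₂).2.2 := by
  have hm := M.moves i (decide (0 < N₁)) (decide (0 < N₂))
  have hc := M.consistent i (decide (0 < N₁)) (decide (0 < N₂))
  simp only [Set.mem_insert_iff, Set.mem_singleton_iff, Prod.mk.injEq] at hm
  simp only [rule]
  rcases Nat.eq_zero_or_pos N₁ with h₁ | h₁ <;> rcases Nat.eq_zero_or_pos N₂ with h₂ | h₂ <;>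
    simp [h₁, h₂] at hm hc ⊢ <;> omega

theorem CounterMachine.counterVal_add_move_nonneg (i : Fin m) (N₁ N₂ : ℕ) (k : Fin 2) :
    0 ≤ counterVal N₁ N₂ k + move (M.rule i N₁ N₂) k := by
  obtain ⟨h₁, h₂⟩ := M.counter_add_rule_nonneg i N₁ N₂
  unfold counterVal move
  split
  · exact_mod_cast h₁
  · exact_mod_cast h₂

theorem CounterMachine.counterVal_step (i : Fin m) (N₁ N₂ : ℕ) (k : Fin 2) :
    counterVal (M.step (i, N₁, N₂)).2.1 (M.step (i, N₁, N₂)).2.2 k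
      = counterVal N₁ N₂ k + move (M.rule i N₁ N₂) k := by
  obtain ⟨h₁, h₂⟩ := M.counter_add_rule_nonneg i N₁ N₂
  unfold counterVal move
  split
  · exact_mod_cast Int.toNat_of_nonneg h₁
  · exact_mod_cast Int.toNat_of_nonneg h₂

end Machine

section Upsilon

variable {m : ℕ} (i : Fin m) (N₁ N₂ : ℕ)

theorem Upsilon_mem_Icc (i' : Fin m) (b c : Bool) : Upsilon i N₁ N₂ i' b c ∈ Icc (-3) 0 := by
  unfold Upsilon indC
  cases b <;> cases c <;> split_ifs <;> norm_num [bnum]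

theorem Upsilon_self : Upsilon i N₁ N₂ i (decide (0 < N₁)) (decide (0 < N₂)) = -3 := by
  unfold Upsilon indC
  rcases Nat.eq_zero_or_pos N₁ with h₁ | h₁ <;> rcases Nat.eq_zero_or_pos N₂ with h₂ | h₂ <;>
    simp [h₁, h₂, bnum, Nat.pos_iff_ne_zero.mp] <;> norm_num

theorem neg_two_le_Upsilon {i' : Fin m} {b c : Bool}
    (hne : (i', b, c) ≠ (i, decide (0 < N₁), decide (0 < N₂))) : -2 ≤ Upsilon i N₁ N₂ i' b c := by
  unfold Upsilon indC
  rcases Nat.eq_zero_or_pos N₁ with h₁ | h₁ <;> rcases Nat.eq_zero_or_pos N₂ with h₂ | h₂ <;>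
    by_cases hi : i' = i <;> cases b <;> cases c <;>
    simp_all [bnum, Nat.pos_iff_ne_zero.mp] <;> norm_num

end Upsilon

theorem max_zero_one_sub_natCast (N : ℕ) : max 0 (1 - (N : ℝ)) = indC (N = 0) := by
  cases N <;> simp [indC]

theorem neg_le_bit_term (b : Bool) {s u : ℝ} (hu₀ : 0 ≤ u) (hu : u ≤ s) :
    -s ≤ -(bnum b * s) + (2 * bnum b - 1) * u := by
  cases b <;> simp [bnum] <;> linarith

section Phases

variable {m : ℕ} {M : CounterMachine m} {w : Idx m → ℝ} {y z : ℝ → Idx m → ℝ}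

theorem IsSkorokhodSolution.le_apply_B
    (h : IsSkorokhodSolution (Rmat M) (linearPath w (thetaVec m)) y z) {s : ℝ} (hs : 0 ≤ s)
    (j : Fin m) : w (.B j) - y s (.A 0) + y s (.B j) ≤ z s (.B j) := by
  rw [h.apply_B hs]
  exact le_add_of_nonneg_right <| Finset.sum_nonneg fun e _ =>
    mul_nonneg (by split <;> norm_num) (h.nonneg hs _)

theorem IsSkorokhodSolution.le_apply_C
    (h : IsSkorokhodSolution (Rmat M) (linearPath w (thetaVec m)) y z) {s : ℝ} (hs : 0 ≤ s)
    (k : Fin 2) : w (.C k) - y s (.A 0) - y s (.A 3) + y s (.C k) ≤ z s (.C k) := by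
  rw [h.apply_C hs]
  have := h.nonneg hs (.D k)
  have : 0 ≤ ∑ e : Fin m × Bool × Bool,
      (move (M.Γ e.1 e.2.1 e.2.2) k + 1) * y s (.E e.1 e.2.1 e.2.2) :=
    Finset.sum_nonneg fun e _ => mul_nonneg (M.move_add_one_nonneg _ _ _ k) (h.nonneg hs _)
  linarith

theorem IsSkorokhodSolution.B_idle
    (h : IsSkorokhodSolution (Rmat M) (linearPath w (thetaVec m)) y z) {j : Fin m}
    (hle : ∀ s ∈ Icc (0 : ℝ) 1, y s (.A 0) ≤ w (.B j)) : ∀ s ∈ Icc (0 : ℝ) 1, y s (.B j) = 0 :=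
  h.eq_zero_of_le fun s hs => by linarith [hle s hs, h.le_apply_B hs.1 j]

theorem IsSkorokhodSolution.B_le
    (h : IsSkorokhodSolution (Rmat M) (linearPath w (thetaVec m)) y z) {j : Fin m}
    (hw : 0 ≤ w (.B j)) (hle : ∀ s ∈ Icc (0 : ℝ) 1, y s (.A 0) ≤ s) :
    ∀ s ∈ Icc (0 : ℝ) 1, y s (.B j) ≤ s := fun s hs => by
  have := h.le_max_of_le (j := .B j) le_rfl zero_le_one
    (fun s hs => by linarith [hle s hs, h.le_apply_B hs.1 j]) s hs
  rwa [one_mul, sub_zero, max_eq_right hs.1] at this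

theorem IsSkorokhodSolution.C_idle
    (h : IsSkorokhodSolution (Rmat M) (linearPath w (thetaVec m)) y z) {k : Fin 2}
    (hle : ∀ s ∈ Icc (0 : ℝ) 1, y s (.A 0) + y s (.A 3) ≤ w (.C k)) :
    ∀ s ∈ Icc (0 : ℝ) 1, y s (.C k) = 0 :=
  h.eq_zero_of_le fun s hs => by linarith [hle s hs, h.le_apply_C hs.1 k]

theorem IsSkorokhodSolution.C_le
    (h : IsSkorokhodSolution (Rmat M) (linearPath w (thetaVec m)) y z) {k : Fin 2}
    (hw : 0 ≤ w (.C k)) (hle : ∀ s ∈ Icc (0 : ℝ) 1, y s (.A 0) + y s (.A 3) ≤ s) :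
    ∀ s ∈ Icc (0 : ℝ) 1, y s (.C k) ≤ s := fun s hs => by
  have := h.le_max_of_le (j := .C k) le_rfl zero_le_one
    (fun s hs => by linarith [hle s hs, h.le_apply_C hs.1 k]) s hs
  rwa [one_mul, sub_zero, max_eq_right hs.1] at this

theorem IsSkorokhodSolution.D_idle
    (h : IsSkorokhodSolution (Rmat M) (linearPath w (thetaVec m)) y z) {k : Fin 2}
    (hle : ∀ s ∈ Icc (0 : ℝ) 1, y s (.A 1) ≤ w (.D k)) : ∀ s ∈ Icc (0 : ℝ) 1, y s (.D k) = 0 :=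
  h.eq_zero_of_le fun s hs => by
    rw [h.apply_D hs.1]
    linarith [hle s hs, h.nonneg hs.1 (.C k)]

/- `stage1`, …, `stage4` are the states `z 1`, …, `z 4` of the solution started at
`encCfg i N₁ N₂`. -/
def stage1 (i : Fin m) (N₁ N₂ : ℕ) : Idx m → ℝ
  | .A l => clock 1 l
  | .B _ => 0
  | .C k => max (counterVal N₁ N₂ k - 1) 0
  | .D k => max 0 (1 - counterVal N₁ N₂ k)
  | .E i' b c => 3 + Upsilon i N₁ N₂ i' b c
  | .F i' b c => 4 + Upsilon i N₁ N₂ i' b c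

def stage2 (i : Fin m) (N₁ N₂ : ℕ) : Idx m → ℝ
  | .A l => clock 2 l
  | .B _ => 0
  | .C k => counterVal N₁ N₂ k
  | .D _ => 0
  | .E i' b c => 3 + Upsilon i N₁ N₂ i' b c
  | .F i' b c => 4 + Upsilon i N₁ N₂ i' b c

def stage3 (M : CounterMachine m) (i : Fin m) (N₁ N₂ : ℕ) : Idx m → ℝ
  | .A l => clock 3 l
  | .B j => if j = (M.rule i N₁ N₂).1 then 0 else 1
  | .C k => counterVal N₁ N₂ k + move (M.rule i N₁ N₂) k + 1
  | .D _ => 0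
  | .E i' b c =>
      if (i', b, c) = (i, decide (0 < N₁), decide (0 < N₂)) then 0 else 2 + Upsilon i N₁ N₂ i' b c
  | .F i' b c =>
      if (i', b, c) = (i, decide (0 < N₁), decide (0 < N₂)) then 1 else 3 + Upsilon i N₁ N₂ i' b c

def stage4 (M : CounterMachine m) (i : Fin m) (N₁ N₂ : ℕ) : Idx m → ℝ
  | .A l => clock 4 l
  | .B j => if j = (M.rule i N₁ N₂).1 then 0 else 1
  | .C k => counterVal N₁ N₂ k + move (M.rule i N₁ N₂) k
  | .D _ => 0
  | .E _ _ _ => 3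
  | .F _ _ _ => 0

variable {i : Fin m} {N₁ N₂ : ℕ}

theorem IsSkorokhodSolution.phase_one_E_F_idle
    (h : IsSkorokhodSolution (Rmat M) (linearPath (encCfg i N₁ N₂) (thetaVec m)) y z)
    (i' : Fin m) (b c : Bool) :
    (∀ s ∈ Icc (0 : ℝ) 1, y s (.E i' b c) = 0) ∧ ∀ s ∈ Icc (0 : ℝ) 1, y s (.F i' b c) = 0 := by
  obtain ⟨hA, -⟩ := h.clock_phase (encCfg_A i N₁ N₂)
  have hB := h.B_le (j := i') (by simp only [encCfg]; split <;> norm_num)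
    fun s hs => by simp [hA s hs]
  have hC (k : Fin 2) := h.C_le (k := k) (counterVal_nonneg N₁ N₂ k) fun s hs => by simp [hA s hs]
  have hbits (s : ℝ) (hs : s ∈ Icc (0 : ℝ) 1) := add_le_add
    (neg_le_bit_term b (h.nonneg hs.1 (.C 0)) (hC 0 s hs))
    (neg_le_bit_term c (h.nonneg hs.1 (.C 1)) (hC 1 s hs))
  -- `z - y ≥ 3 - 3 s` on `E`: the `B`-term and each of the two bit terms cost at most `s`.
  refine ⟨h.eq_zero_of_le fun s hs => ?_, h.eq_zero_of_le fun s hs => ?_⟩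
  · rw [h.apply_E hs.1]
    simp only [hA s hs, encCfg, Fin.reduceEq, ↓reduceIte]
    linarith [hs.2, h.nonneg hs.1 (.F i' b c), hB s hs, hbits s hs]
  · rw [h.apply_F hs.1]
    simp only [hA s hs, encCfg, Fin.reduceEq, ↓reduceIte]
    linarith [hs.2, h.nonneg hs.1 (.E i' b c), hB s hs, hbits s hs]

theorem IsSkorokhodSolution.phase_one_increments
    (h : IsSkorokhodSolution (Rmat M) (linearPath (encCfg i N₁ N₂) (thetaVec m)) y z) :
    ∀ s ∈ Icc (0 : ℝ) 1, (∀ j, y s (.B j) = if j = i then s else 0) ∧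
      (∀ k, y s (.C k) = max 0 (s - counterVal N₁ N₂ k)) ∧ (∀ k, y s (.D k) = 0) ∧
      (∀ i' b c, y s (.E i' b c) = 0) ∧ ∀ i' b c, y s (.F i' b c) = 0 := by
  obtain ⟨hA, -⟩ := h.clock_phase (encCfg_A i N₁ N₂)
  have hE i' b c := (h.phase_one_E_F_idle i' b c).1
  have hF i' b c := (h.phase_one_E_F_idle i' b c).2
  have hD (k : Fin 2) := h.D_idle (k := k) fun s hs => by simp [hA s hs, encCfg]
  have hB (j : Fin m) : ∀ s ∈ Icc (0 : ℝ) 1, y s (.B j) = if j = i then s else 0 := by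
    split_ifs with hj
    · subst hj
      intro s hs
      rw [h.eq_max_of_eq le_rfl zero_le_one (fun s hs => by
        simp [h.apply_B hs.1, hA s hs, hE _ _ _ s hs, encCfg]) s hs]
      simp [hs.1]
    · exact h.B_idle fun s hs => by simpa [hA s hs, encCfg, hj] using hs.2
  have hC (k : Fin 2) : ∀ s ∈ Icc (0 : ℝ) 1, y s (.C k) = max 0 (s - counterVal N₁ N₂ k) :=
    fun s hs => by
      rw [h.eq_max_of_eq (counterVal_nonneg N₁ N₂ k) zero_le_one (fun s hs => by
        simp [h.apply_C hs.1, hA s hs, hE _ _ _ s hs, hD k s hs, encCfg, counterVal]) s hs, one_mul]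
  exact fun s hs => ⟨fun j => hB j s hs, fun k => hC k s hs, fun k => hD k s hs,
    fun i' b c => hE i' b c s hs, fun i' b c => hF i' b c s hs⟩

theorem IsSkorokhodSolution.phase_one
    (h : IsSkorokhodSolution (Rmat M) (linearPath (encCfg i N₁ N₂) (thetaVec m)) y z) :
    z 1 = stage1 i N₁ N₂ := by
  obtain ⟨hA, hzA⟩ := h.clock_phase (encCfg_A i N₁ N₂)
  have h1 : (1 : ℝ) ∈ Icc 0 1 := right_mem_Icc.2 zero_le_one
  obtain ⟨hB, hC, hD, hE, hF⟩ := h.phase_one_increments 1 h1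
  ext p
  rcases p with l | j | k | k | ⟨i', b, c⟩ | ⟨i', b, c⟩
  · simpa [stage1] using hzA l
  · simp [h.apply_B zero_le_one, hA 1 h1, hB, hE, encCfg, stage1]
    split_ifs <;> simp
  · simp [h.apply_C zero_le_one, hA 1 h1, hC, hD, hE, stage1]
    rw [show encCfg i N₁ N₂ (.C k) = counterVal N₁ N₂ k from rfl, add_max]
    ring_nf
  · simp [h.apply_D zero_le_one, hA 1 h1, hC, hD, encCfg, stage1]
  · simp [h.apply_E zero_le_one, hA 1 h1, hB, hC, hE, hF, encCfg, stage1, Upsilon, counterVal,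
      max_zero_one_sub_natCast, indC]
    split_ifs <;> ring
  · simp [h.apply_F zero_le_one, hA 1 h1, hB, hC, hE, hF, encCfg, stage1, Upsilon, counterVal,
      max_zero_one_sub_natCast, indC]
    split_ifs <;> ring

theorem IsSkorokhodSolution.phase_two_increments
    (h : IsSkorokhodSolution (Rmat M) (linearPath (stage1 i N₁ N₂) (thetaVec m)) y z) :
    ∀ s ∈ Icc (0 : ℝ) 1, (∀ j, y s (.B j) = 0) ∧ (∀ k, y s (.C k) = 0) ∧
      (∀ k, y s (.D k) = max 0 (s - stage1 i N₁ N₂ (.D k))) ∧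
      (∀ i' b c, y s (.E i' b c) = 0) ∧ ∀ i' b c, y s (.F i' b c) = 0 := by
  obtain ⟨hA, -⟩ := h.clock_phase (k := 1) fun _ => rfl
  have hB (j : Fin m) := h.B_idle (j := j) fun s hs => by simp [hA s hs, stage1]
  have hC (k : Fin 2) := h.C_idle (k := k) fun s hs => by simp [hA s hs, stage1]
  have hE (i' : Fin m) (b c : Bool) : ∀ s ∈ Icc (0 : ℝ) 1, y s (.E i' b c) = 0 :=
    h.eq_zero_of_le fun s hs => by
      rw [h.apply_E hs.1]
      simp [hA s hs, hB i' s hs, hC 0 s hs, hC 1 s hs, stage1]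
      linarith [(Upsilon_mem_Icc i N₁ N₂ i' b c).1, h.nonneg hs.1 (.F i' b c)]
  have hF (i' : Fin m) (b c : Bool) : ∀ s ∈ Icc (0 : ℝ) 1, y s (.F i' b c) = 0 :=
    h.eq_zero_of_le fun s hs => by
      rw [h.apply_F hs.1]
      simp [hA s hs, hB i' s hs, hC 0 s hs, hC 1 s hs, stage1]
      linarith [(Upsilon_mem_Icc i N₁ N₂ i' b c).1, h.nonneg hs.1 (.E i' b c)]
  have hD (k : Fin 2) : ∀ s ∈ Icc (0 : ℝ) 1, y s (.D k) = max 0 (s - stage1 i N₁ N₂ (.D k)) :=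
    fun s hs => by
      rw [h.eq_max_of_eq (v := stage1 i N₁ N₂ (.D k)) (le_max_left _ _) zero_le_one (fun s hs => by
        simp [h.apply_D hs.1, hA s hs, hC k s hs]) s hs, one_mul]
  exact fun s hs => ⟨fun j => hB j s hs, fun k => hC k s hs, fun k => hD k s hs,
    fun i' b c => hE i' b c s hs, fun i' b c => hF i' b c s hs⟩

theorem IsSkorokhodSolution.phase_two
    (h : IsSkorokhodSolution (Rmat M) (linearPath (stage1 i N₁ N₂) (thetaVec m)) y z) :
    z 1 = stage2 i N₁ N₂ := by
  obtain ⟨hA, hzA⟩ := h.clock_phase (k := 1) fun _ => rfl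
  have h1 : (1 : ℝ) ∈ Icc 0 1 := right_mem_Icc.2 zero_le_one
  obtain ⟨hB, hC, hD, hE, hF⟩ := h.phase_two_increments 1 h1
  have hN := counterVal_nonneg N₁ N₂
  ext p
  rcases p with l | j | k | k | ⟨i', b, c⟩ | ⟨i', b, c⟩
  · simpa [stage2] using hzA l
  · simp [h.apply_B zero_le_one, hA 1 h1, hB, hE, stage1, stage2]
  · simp [h.apply_C zero_le_one, hA 1 h1, hC, hD, hE, stage1, stage2, max_def]
    split_ifs <;> linarith [hN k]
  · simp [h.apply_D zero_le_one, hA 1 h1, hC, hD, stage1, stage2, max_def]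
    split_ifs <;> linarith [hN k]
  · simp [h.apply_E zero_le_one, hA 1 h1, hB, hC, hE, hF, stage1, stage2]
  · simp [h.apply_F zero_le_one, hA 1 h1, hB, hC, hE, hF, stage1, stage2]

theorem IsSkorokhodSolution.phase_three_increments
    (h : IsSkorokhodSolution (Rmat M) (linearPath (stage2 i N₁ N₂) (thetaVec m)) y z) :
    ∀ s ∈ Icc (0 : ℝ) 1, (∀ j, y s (.B j) = 0) ∧ (∀ k, y s (.C k) = 0) ∧ (∀ k, y s (.D k) = 0) ∧
      (∀ i' b c, y s (.E i' b c) =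
        if (i', b, c) = (i, decide (0 < N₁), decide (0 < N₂)) then s else 0) ∧
      ∀ i' b c, y s (.F i' b c) = 0 := by
  obtain ⟨hA, -⟩ := h.clock_phase (k := 2) fun _ => rfl
  have hB (j : Fin m) := h.B_idle (j := j) fun s hs => by simp [hA s hs, stage2]
  have hC (k : Fin 2) := h.C_idle (k := k) fun s hs => by
    simp [hA s hs, stage2, counterVal_nonneg N₁ N₂ k]
  have hD (k : Fin 2) := h.D_idle (k := k) fun s hs => by simp [hA s hs, stage2]
  have hF (i' : Fin m) (b c : Bool) : ∀ s ∈ Icc (0 : ℝ) 1, y s (.F i' b c) = 0 :=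
    h.eq_zero_of_le fun s hs => by
      rw [h.apply_F hs.1]
      simp [hA s hs, hB i' s hs, hC 0 s hs, hC 1 s hs, stage2]
      linarith [hs.2, (Upsilon_mem_Icc i N₁ N₂ i' b c).1, h.nonneg hs.1 (.E i' b c)]
  -- Only the coordinate read by the machine has `Υ = -3`, so only it is pushed.
  have hE (i' : Fin m) (b c : Bool) : ∀ s ∈ Icc (0 : ℝ) 1,
      y s (.E i' b c) = if (i', b, c) = (i, decide (0 < N₁), decide (0 < N₂)) then s else 0 := by
    split_ifs with hmatch
    · simp only [Prod.mk.injEq] at hmatch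
      obtain ⟨rfl, rfl, rfl⟩ := hmatch
      intro s hs
      rw [h.eq_max_of_eq le_rfl zero_le_one (fun s hs => by
        simp [h.apply_E hs.1, hA s hs, hB _ s hs, hC 0 s hs, hC 1 s hs, hF _ _ _ s hs, stage2,
          Upsilon_self]) s hs]
      simp [hs.1]
    · exact h.eq_zero_of_le fun s hs => by
        rw [h.apply_E hs.1]
        simp [hA s hs, hB i' s hs, hC 0 s hs, hC 1 s hs, stage2]
        linarith [hs.2, neg_two_le_Upsilon i N₁ N₂ hmatch, h.nonneg hs.1 (.F i' b c)]
  exact fun s hs => ⟨fun j => hB j s hs, fun k => hC k s hs, fun k => hD k s hs,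
    fun i' b c => hE i' b c s hs, fun i' b c => hF i' b c s hs⟩

theorem IsSkorokhodSolution.phase_three
    (h : IsSkorokhodSolution (Rmat M) (linearPath (stage2 i N₁ N₂) (thetaVec m)) y z) :
    z 1 = stage3 M i N₁ N₂ := by
  obtain ⟨hA, hzA⟩ := h.clock_phase (k := 2) fun _ => rfl
  have h1 : (1 : ℝ) ∈ Icc 0 1 := right_mem_Icc.2 zero_le_one
  obtain ⟨hB, hC, hD, hE, hF⟩ := h.phase_three_increments 1 h1
  ext p
  rcases p with l | j | k | k | ⟨i', b, c⟩ | ⟨i', b, c⟩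
  · simpa [stage3] using hzA l
  · simp [h.apply_B zero_le_one, hA 1 h1, hB, hE, stage2, stage3, CounterMachine.rule, eq_comm]
    congr
  · simp [h.apply_C zero_le_one, hA 1 h1, hC, hD, hE, stage2, stage3, CounterMachine.rule,
      add_assoc]
  · simp [h.apply_D zero_le_one, hA 1 h1, hC, hD, stage2, stage3]
  all_goals
    simp [h.apply_E zero_le_one, h.apply_F zero_le_one, hA 1 h1, hB, hC, hE, hF, stage2, stage3]
    split_ifs with hmatch
    · obtain ⟨rfl, rfl, rfl⟩ := hmatch
      norm_num [Upsilon_self]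
    · ring

theorem stage3_E_F (M : CounterMachine m) (i : Fin m) (N₁ N₂ : ℕ) (i' : Fin m) (b c : Bool) :
    stage3 M i N₁ N₂ (.E i' b c) ∈ Icc 0 3 ∧
      stage3 M i N₁ N₂ (.F i' b c) = stage3 M i N₁ N₂ (.E i' b c) + 1 := by
  simp only [stage3, mem_Icc]
  split_ifs with hmatch
  · norm_num
  · refine ⟨⟨?_, ?_⟩, by ring⟩ <;>
      linarith [neg_two_le_Upsilon i N₁ N₂ hmatch, (Upsilon_mem_Icc i N₁ N₂ i' b c).2]

theorem IsSkorokhodSolution.phase_four_increments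
    (h : IsSkorokhodSolution (Rmat M) (linearPath (stage3 M i N₁ N₂) (thetaVec m)) y z) :
    ∀ s ∈ Icc (0 : ℝ) 1, (∀ j, y s (.B j) = 0) ∧ (∀ k, y s (.C k) = 0) ∧ (∀ k, y s (.D k) = 0) ∧
      (∀ i' b c, y s (.E i' b c) = 0) ∧
      ∀ i' b c, y s (.F i' b c) = max 0 (4 * s - stage3 M i N₁ N₂ (.F i' b c)) := by
  obtain ⟨hA, -⟩ := h.clock_phase (k := 3) fun _ => rfl
  have hB (j : Fin m) := h.B_idle (j := j) fun s hs => by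
    simp [hA s hs, stage3]; split_ifs <;> norm_num
  have hC (k : Fin 2) := h.C_idle (k := k) fun s hs => by
    simp [hA s hs, stage3]
    linarith [hs.2, M.counterVal_add_move_nonneg i N₁ N₂ k]
  have hD (k : Fin 2) := h.D_idle (k := k) fun s hs => by simp [hA s hs, stage3]
  have hE (i' : Fin m) (b c : Bool) : ∀ s ∈ Icc (0 : ℝ) 1, y s (.E i' b c) = 0 :=
    h.eq_zero_of_le fun s hs => by
      rw [h.apply_E hs.1]
      simp [hA s hs, hB i' s hs, hC 0 s hs, hC 1 s hs]
      linarith [(stage3_E_F M i N₁ N₂ i' b c).1.1, h.nonneg hs.1 (.F i' b c)]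
  have hF (i' : Fin m) (b c : Bool) : ∀ s ∈ Icc (0 : ℝ) 1,
      y s (.F i' b c) = max 0 (4 * s - stage3 M i N₁ N₂ (.F i' b c)) := by
    obtain ⟨⟨hE₀, -⟩, hF_eq⟩ := stage3_E_F M i N₁ N₂ i' b c
    exact h.eq_max_of_eq (by linarith) (by norm_num) fun s hs => by
      simp [h.apply_F hs.1, hA s hs, hB i' s hs, hC 0 s hs, hC 1 s hs, hE i' b c s hs]
  exact fun s hs => ⟨fun j => hB j s hs, fun k => hC k s hs, fun k => hD k s hs,
    fun i' b c => hE i' b c s hs, fun i' b c => hF i' b c s hs⟩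

theorem IsSkorokhodSolution.phase_four
    (h : IsSkorokhodSolution (Rmat M) (linearPath (stage3 M i N₁ N₂) (thetaVec m)) y z) :
    z 1 = stage4 M i N₁ N₂ := by
  obtain ⟨hA, hzA⟩ := h.clock_phase (k := 3) fun _ => rfl
  have h1 : (1 : ℝ) ∈ Icc 0 1 := right_mem_Icc.2 zero_le_one
  obtain ⟨hB, hC, hD, hE, hF⟩ := h.phase_four_increments 1 h1
  ext p
  rcases p with l | j | k | k | ⟨i', b, c⟩ | ⟨i', b, c⟩
  · simpa [stage4] using hzA l
  · simp [h.apply_B zero_le_one, hA 1 h1, hB, hE, stage3, stage4]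
  · simp [h.apply_C zero_le_one, hA 1 h1, hC, hD, hE, stage3, stage4]
  · simp [h.apply_D zero_le_one, hA 1 h1, hC, hD, stage3, stage4]
  all_goals
    simp [h.apply_E zero_le_one, h.apply_F zero_le_one, hA 1 h1, hB, hC, hE, hF, stage4]
    obtain ⟨⟨-, hle⟩, hF_eq⟩ := stage3_E_F M i N₁ N₂ i' b c
    rw [hF_eq, max_eq_right (by linarith)]
    ring

theorem IsSkorokhodSolution.phase_five_increments
    (h : IsSkorokhodSolution (Rmat M) (linearPath (stage4 M i N₁ N₂) (thetaVec m)) y z) :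
    ∀ s ∈ Icc (0 : ℝ) 1, (∀ j, y s (.B j) = 0) ∧ (∀ k, y s (.C k) = 0) ∧ (∀ k, y s (.D k) = 0) ∧
      (∀ i' b c, y s (.E i' b c) = 0) ∧ ∀ i' b c, y s (.F i' b c) = 0 := by
  obtain ⟨hA, -⟩ := h.clock_phase (k := 4) fun _ => rfl
  have hB (j : Fin m) := h.B_idle (j := j) fun s hs => by
    simp [hA s hs, stage4]; split_ifs <;> norm_num
  have hC (k : Fin 2) := h.C_idle (k := k) fun s hs => by
    simp [hA s hs, stage4, M.counterVal_add_move_nonneg i N₁ N₂ k]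
  have hD (k : Fin 2) := h.D_idle (k := k) fun s hs => by simp [hA s hs, stage4]
  have hE (i' : Fin m) (b c : Bool) : ∀ s ∈ Icc (0 : ℝ) 1, y s (.E i' b c) = 0 :=
    h.eq_zero_of_le fun s hs => by
      rw [h.apply_E hs.1]
      simp [hA s hs, hB i' s hs, hC 0 s hs, hC 1 s hs, stage4]
      linarith [h.nonneg hs.1 (.F i' b c)]
  have hF (i' : Fin m) (b c : Bool) : ∀ s ∈ Icc (0 : ℝ) 1, y s (.F i' b c) = 0 :=
    h.eq_zero_of_le fun s hs => by
      rw [h.apply_F hs.1]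
      simp [hA s hs, hB i' s hs, hC 0 s hs, hC 1 s hs, hE i' b c s hs, stage4]
      linarith [hs.1]
  exact fun s hs => ⟨fun j => hB j s hs, fun k => hC k s hs, fun k => hD k s hs,
    fun i' b c => hE i' b c s hs, fun i' b c => hF i' b c s hs⟩

theorem IsSkorokhodSolution.phase_five
    (h : IsSkorokhodSolution (Rmat M) (linearPath (stage4 M i N₁ N₂) (thetaVec m)) y z) :
    z 1 = encCfg (M.step (i, N₁, N₂)).1 (M.step (i, N₁, N₂)).2.1 (M.step (i, N₁, N₂)).2.2 := by
  obtain ⟨hA, hzA⟩ := h.clock_phase (k := 4) fun _ => rfl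
  have h1 : (1 : ℝ) ∈ Icc 0 1 := right_mem_Icc.2 zero_le_one
  obtain ⟨hB, hC, hD, hE, hF⟩ := h.phase_five_increments 1 h1
  ext p
  rcases p with l | j | k | k | ⟨i', b, c⟩ | ⟨i', b, c⟩
  · simpa [encCfg_A] using hzA l
  · simp [h.apply_B zero_le_one, hA 1 h1, hB, hE, stage4, encCfg]
    rfl
  · simp [h.apply_C zero_le_one, hA 1 h1, hC, hD, hE, stage4]
    exact (M.counterVal_step i N₁ N₂ k).symm
  · simp [h.apply_D zero_le_one, hA 1 h1, hC, hD, stage4, encCfg]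
  · simp [h.apply_E zero_le_one, hA 1 h1, hB, hC, hE, hF, stage4, encCfg]
  · simp [h.apply_F zero_le_one, hA 1 h1, hB, hC, hE, hF, stage4, encCfg]

end Phases

theorem IsSkorokhodSolution.machine_step {m : ℕ} {M : CounterMachine m} {i : Fin m} {N₁ N₂ : ℕ}
    {y z : ℝ → Idx m → ℝ}
    (h : IsSkorokhodSolution (Rmat M) (linearPath (encCfg i N₁ N₂) (thetaVec m)) y z) :
    z 5 = encCfg (M.step (i, N₁, N₂)).1 (M.step (i, N₁, N₂)).2.1 (M.step (i, N₁, N₂)).2.2 := by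
  have h₂ := (h.shift zero_le_one h.phase_one).phase_two
  have h₃ := (h.shift (by norm_num) h₂).phase_three
  have h₄ := (h.shift (by norm_num) h₃).phase_four
  have h₅ := (h.shift (by norm_num) h₄).phase_five
  norm_num at h₅
  exact h₅

/-- The Skorokhod problem associated with a consistent counter
machine simulates it: at time `5t`, every Skorokhod solution started from the
encoding of the initial configuration sits at the encoding of the configuration
of the trajectory at time `t`. -/
theorem skorokhod_simulates_counter_machine {m : ℕ} (M : CounterMachine m)
    (i0 : Fin m) (C₁ C₂ : ℕ) (y z : ℝ → Idx m → ℝ)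
    (h : IsSkorokhodSolution (Rmat M) (fluidX i0 C₁ C₂) y z) :
    ∀ t : ℕ,
      z (5 * (t : ℝ)) =
        encCfg ((M.step)^[t] (i0, C₁, C₂)).1
          ((M.step)^[t] (i0, C₁, C₂)).2.1 ((M.step)^[t] (i0, C₁, C₂)).2.2 := by
  intro t
  induction t with
  | zero =>
    rw [Nat.cast_zero, mul_zero, h.apply_zero]
    ext p
    simp [fluidX]
  | succ t ih =>
    have := (h.shift (by positivity) ih).machine_step
    rw [Function.iterate_succ_apply']
    convert this using 2
    push_cast
    ring
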